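/- arXiv:1109.3220 — 5 statements merged into one kernel-verified Lean document; each statement's English description precedes it below -/
import Mathlib

section
/- Let X = (X_t)_{t≥0} be a Lévy process in a metrizable compact group G, and for t ≥ 0 let S_t be the support of the distribution of X₀⁻¹X_t. Then the closure of ⋃_{t≥0} S_t is a (closed) subgroup of G. -/
open MeasureTheory ProbabilityTheory Filter Topology

noncomputable section

/-- The support of a Borel (probability) measure: the smallest closed set of full measure,
realized as the intersection of all closed sets of full measure. -/
def measSupport {G : Type*} [TopologicalSpace G] [MeasurableSpace G]
    (μ : Measure G) : Set G :=
  ⋂₀ {F : Set G | IsClosed F ∧ μ F = 1}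

/-- A measurable function `γ : [0,∞) → G` is continuously uniformly distributed (c.u.d.)
with respect to the probability measure `μ` on `G` if, for every continuous `φ : G → ℂ`,
`(1/T) ∫₀^T φ(γ(t)) dt → ∫_G φ dμ` as `T → +∞`. -/
def IsCUD {G : Type*} [TopologicalSpace G] [MeasurableSpace G]
    (μ : Measure G) (γ : ℝ → G) : Prop :=
  ∀ φ : C(G, ℂ),
    Tendsto (fun T : ℝ => (1 / T) • ∫ t in Set.Ioc (0 : ℝ) T, φ (γ t)) atTop
      (nhds (∫ g, φ g ∂μ))

/-- A Lévy process in a (metrizable compact) group `G`: a family `X = (X_t)_{t ≥ 0}` of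
`G`-valued random variables with stationary, independent increments and almost surely
right-continuous paths with left limits on `[0,∞)`. -/
structure IsLevyProcess {Ω G : Type*} [MeasurableSpace Ω]
    [TopologicalSpace G] [Group G] [MeasurableSpace G]
    (P : Measure Ω) (X : ℝ → Ω → G) : Prop where
  measurable : ∀ t : ℝ, 0 ≤ t → Measurable (X t)
  stationary : ∀ t₁ t₂ : ℝ, 0 ≤ t₁ → t₁ < t₂ →
    P.map (fun ω => (X t₁ ω)⁻¹ * X t₂ ω) = P.map (fun ω => (X 0 ω)⁻¹ * X (t₂ - t₁) ω)
  indep : ∀ (n : ℕ) (t : Fin (n + 1) → ℝ), 0 ≤ t 0 → StrictMono t →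
    iIndepFun (m := fun _ => ‹MeasurableSpace G›)
      (fun i : Fin (n + 1) =>
        Fin.cases (fun ω => X (t 0) ω)
          (fun j (ω : Ω) => (X (t j.castSucc) ω)⁻¹ * X (t j.succ) ω) i) P
  rcll : ∀ᵐ ω ∂P, ∀ t : ℝ, 0 ≤ t →
    Tendsto (fun s => X s ω) (nhdsWithin t (Set.Ioi t)) (nhds (X t ω)) ∧
    (0 < t → ∃ l, Tendsto (fun s => X s ω) (nhdsWithin t (Set.Ico 0 t)) (nhds l))

/-!
The supports `S_t` satisfy `1 ∈ S_0` and `S_s * S_t ⊆ S_{s+t}`: the increments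
`X₀⁻¹X_s` and `X_s⁻¹X_{s+t}` are independent, the second one has the law of `X₀⁻¹X_t`, and
their product is `X₀⁻¹X_{s+t}`. Hence `⋃ S_t` is a submonoid, and the closure of a submonoid of
a compact group is a subgroup, because there `x⁻¹` is a limit point of the powers `xⁿ`.
-/

section measSupport

variable {G : Type*} [TopologicalSpace G] [MeasurableSpace G] [OpensMeasurableSpace G]

lemma mem_measSupport_iff (μ : Measure G) [IsProbabilityMeasure μ] {x : G} :
    x ∈ measSupport μ ↔ ∀ U : Set G, IsOpen U → x ∈ U → μ U ≠ 0 := by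
  constructor
  · intro hx U hU hxU hμU
    exact hx Uᶜ ⟨hU.isClosed_compl, (prob_compl_eq_one_iff hU.measurableSet).2 hμU⟩ hxU
  · rintro h F ⟨hF, hμF⟩
    by_contra hxF
    exact h Fᶜ hF.isOpen_compl hxF ((prob_compl_eq_zero_iff hF.measurableSet).2 hμF)

lemma mem_measSupport_dirac (x : G) : x ∈ measSupport (Measure.dirac x) :=
  (mem_measSupport_iff _).2 fun _ hU hxU => by
    simp [Measure.dirac_apply_of_mem hxU]

theorem ProbabilityTheory.IndepFun.mul_mem_measSupport_map [Mul G] [ContinuousMul G]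
    [MeasurableMul₂ G] {Ω : Type*} [MeasurableSpace Ω] {P : Measure Ω} [IsProbabilityMeasure P]
    {A B : Ω → G} (hA : Measurable A) (hB : Measurable B) (hAB : IndepFun A B P) {a b : G}
    (ha : a ∈ measSupport (P.map A)) (hb : b ∈ measSupport (P.map B)) :
    a * b ∈ measSupport (P.map (A * B)) := by
  have := Measure.isProbabilityMeasure_map (μ := P) hA.aemeasurable
  have := Measure.isProbabilityMeasure_map (μ := P) hB.aemeasurable
  have := Measure.isProbabilityMeasure_map (μ := P) (hA.mul hB).aemeasurable
  rw [mem_measSupport_iff] at ha hb ⊢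
  intro U hU habU
  obtain ⟨V, W, hV, hW, haV, hbW, hVW⟩ :=
    isOpen_prod_iff.1 (hU.preimage continuous_mul) a b habU
  have hPV := ha V hV haV
  have hPW := hb W hW hbW
  rw [Measure.map_apply hA hV.measurableSet] at hPV
  rw [Measure.map_apply hB hW.measurableSet] at hPW
  rw [Measure.map_apply (hA.mul hB) hU.measurableSet]
  intro hPU
  refine mul_ne_zero hPV hPW ?_
  rw [← hAB.measure_inter_preimage_eq_mul _ _ hV.measurableSet hW.measurableSet]
  exact measure_mono_null (fun ω hω => hVW (Set.mk_mem_prod hω.1 hω.2)) hPU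

end measSupport

theorem Submonoid.exists_subgroup_coe_eq_closure {G : Type*} [Group G] [TopologicalSpace G]
    [IsTopologicalGroup G] [CompactSpace G] (M : Submonoid G) :
    ∃ H : Subgroup G, (H : Set G) = _root_.closure (M : Set G) := by
  refine ⟨(Subgroup.closure M).topologicalClosure, ?_⟩
  rw [Subgroup.topologicalClosure_coe, ← closure_submonoidClosure_eq_closure_subgroupClosure,
    Submonoid.closure_eq]

namespace IsLevyProcess

variable {Ω G : Type*} [MeasurableSpace Ω] [TopologicalSpace G] [Group G] [MeasurableSpace G]
  {P : Measure Ω} {X : ℝ → Ω → G}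

theorem measurable_increment [MeasurableMul₂ G] [MeasurableInv G] (hX : IsLevyProcess P X)
    {s t : ℝ} (hs : 0 ≤ s) (ht : 0 ≤ t) : Measurable fun ω => (X s ω)⁻¹ * X t ω :=
  (hX.measurable s hs).inv.mul (hX.measurable t ht)

theorem map_increment (hX : IsLevyProcess P X) {s u : ℝ} (hs : 0 ≤ s) (hsu : s ≤ u) :
    P.map (fun ω => (X s ω)⁻¹ * X u ω) = P.map (fun ω => (X 0 ω)⁻¹ * X (u - s) ω) := by
  rcases hsu.eq_or_lt with rfl | hsu
  · simp only [sub_self, inv_mul_cancel]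
  · exact hX.stationary s u hs hsu

theorem indepFun_increments [IsProbabilityMeasure P] (hX : IsLevyProcess P X) {r s u : ℝ}
    (hr : 0 ≤ r) (hrs : r ≤ s) (hsu : s ≤ u) :
    IndepFun (fun ω => (X r ω)⁻¹ * X s ω) (fun ω => (X s ω)⁻¹ * X u ω) P := by
  rcases hrs.eq_or_lt with rfl | hrs
  · simp only [inv_mul_cancel]
    exact indepFun_const_left _ _
  rcases hsu.eq_or_lt with rfl | hsu
  · simp only [inv_mul_cancel]
    exact indepFun_const_right _ _
  have hmono : StrictMono ![r, s, u] := by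
    rw [Fin.strictMono_iff_lt_succ]
    intro i
    fin_cases i <;> simpa
  exact (hX.indep 2 ![r, s, u] hr hmono).indepFun (show (1 : Fin 3) ≠ 2 by decide)

variable [ContinuousMul G] [OpensMeasurableSpace G] [MeasurableMul₂ G] [MeasurableInv G]
  [IsProbabilityMeasure P]

theorem mul_mem_measSupport_increment (hX : IsLevyProcess P X) {s t : ℝ} (hs : 0 ≤ s)
    (ht : 0 ≤ t) {a b : G} (ha : a ∈ measSupport (P.map fun ω => (X 0 ω)⁻¹ * X s ω))
    (hb : b ∈ measSupport (P.map fun ω => (X 0 ω)⁻¹ * X t ω)) :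
    a * b ∈ measSupport (P.map fun ω => (X 0 ω)⁻¹ * X (s + t) ω) := by
  have hsu : s ≤ s + t := le_add_of_nonneg_right ht
  have hlaw := hX.map_increment hs hsu
  rw [add_sub_cancel_left] at hlaw
  rw [← hlaw] at hb
  have hprod : (fun ω => (X 0 ω)⁻¹ * X (s + t) ω) =
      (fun ω => (X 0 ω)⁻¹ * X s ω) * fun ω => (X s ω)⁻¹ * X (s + t) ω := by
    funext ω
    simp [mul_assoc]
  rw [hprod]
  exact (hX.indepFun_increments le_rfl hs hsu).mul_mem_measSupport_map
    (hX.measurable_increment le_rfl hs) (hX.measurable_increment hs (hs.trans hsu)) ha hb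

def supportSubmonoid (hX : IsLevyProcess P X) : Submonoid G where
  carrier := ⋃ t ∈ Set.Ici (0 : ℝ), measSupport (P.map fun ω => (X 0 ω)⁻¹ * X t ω)
  one_mem' := Set.mem_biUnion (Set.mem_Ici.2 le_rfl) <| by
    simpa only [inv_mul_cancel, Measure.map_const, measure_univ, one_smul]
      using mem_measSupport_dirac (1 : G)
  mul_mem' := by
    simp only [Set.mem_iUnion₂, Set.mem_Ici]
    rintro a b ⟨s, hs, ha⟩ ⟨t, ht, hb⟩
    exact ⟨s + t, add_nonneg hs ht, hX.mul_mem_measSupport_increment hs ht ha hb⟩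

end IsLevyProcess

/-- For every Lévy process in a metrizable compact group `G`, the closure of the union of
the supports `S_t` of the distributions of the increments `X₀⁻¹ X_t`, `t ≥ 0`, is a
(closed) subgroup of `G`. -/
theorem levy_closure_union_supports_subgroup
    {Ω G : Type*} [MeasurableSpace Ω]
    [TopologicalSpace G] [Group G] [IsTopologicalGroup G]
    [CompactSpace G] [TopologicalSpace.MetrizableSpace G] [MeasurableSpace G] [BorelSpace G]
    (P : Measure Ω) [IsProbabilityMeasure P]
    (X : ℝ → Ω → G) (hX : IsLevyProcess P X)
    (S : ℝ → Set G)
    (hS : ∀ t : ℝ, 0 ≤ t → S t = measSupport (P.map fun ω => (X 0 ω)⁻¹ * X t ω)) :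
    ∃ H : Subgroup G, (H : Set G) = closure (⋃ t ∈ Set.Ici (0 : ℝ), S t) := by
  obtain ⟨H, hH⟩ := hX.supportSubmonoid.exists_subgroup_coe_eq_closure
  have hU : (⋃ t ∈ Set.Ici (0 : ℝ), S t) = hX.supportSubmonoid :=
    Set.iUnion₂_congr fun t ht => hS t ht
  exact ⟨H, by rw [hH, hU]⟩
end
end

section
/- Let G be a metrizable compact group with normalized Haar measure λ_G, let H₀ be a dense subset of G, and let B be a Borel subset of G such that λ_G(Bh △ B) = 0 for every h ∈ H₀ (where △ denotes symmetric difference and Bh = {bh : b ∈ B}). Then λ_G(B) ∈ {0, 1}. -/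
open MeasureTheory Filter Topology
open scoped symmDiff

/-!
The elements `g` with `B * g =ᵐ B` form a closed set, because `g ↦ μ(Bg ∆ B)` is continuous;
containing a dense set, it is all of `G`. A set that is a.e. invariant under every right
translation is null or conull, since the right regular action of `G` on itself is ergodic
(Fubini applied to `(x, g) ↦ 1_B (x * g)`).
-/

theorem MeasureTheory.Measure.isMulRightInvariant_of_isProbabilityMeasure
    {G : Type*} [Group G] [TopologicalSpace G] [IsTopologicalGroup G] [LocallyCompactSpace G]
    [MeasurableSpace G] [BorelSpace G] (μ : Measure G) [μ.IsHaarMeasure]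
    [IsProbabilityMeasure μ] :
    μ.IsMulRightInvariant where
  map_mul_right_eq_self g := by
    have : IsProbabilityMeasure (μ.map (· * g)) :=
      isProbabilityMeasure_map (measurable_mul_const g).aemeasurable
    exact isHaarMeasure_eq_of_isProbabilityMeasure _ μ

theorem Filter.EventuallyConst.measure_eq_zero_or_one {α : Type*} [MeasurableSpace α]
    {μ : Measure α} [IsProbabilityMeasure μ] {s : Set α} (hs : EventuallyConst s (ae μ)) :
    μ s = 0 ∨ μ s = 1 := by
  rcases eventuallyConst_set'.1 hs with h | h
  · exact .inl (by simpa using measure_congr h)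
  · exact .inr (by simpa using measure_congr h)

theorem MeasureTheory.aeconst_of_dense_setOf_preimage_mul_right_ae
    {G : Type*} [Group G] [TopologicalSpace G] [IsTopologicalGroup G] [CompactSpace G]
    [SecondCountableTopology G] [MeasurableSpace G] [BorelSpace G]
    {μ : Measure G} [μ.IsHaarMeasure] [IsProbabilityMeasure μ] {s : Set G}
    (hsm : NullMeasurableSet s μ) (hd : Dense {g : G | (· * g) ⁻¹' s =ᵐ[μ] s}) :
    EventuallyConst s (ae μ) := by
  have := μ.isMulRightInvariant_of_isProbabilityMeasure
  exact aeconst_of_dense_setOfPred_preimage_smul_ae (M := Gᵐᵒᵖ) hsm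
    (hd.preimage MulOpposite.opHomeomorph.symm.isOpenMap)

/-- Let `G` be a metrizable compact group with normalized Haar measure `μG`, let `H₀` be a
dense subset of `G`, and let `B` be a Borel set with `μG (Bh ∆ B) = 0` for every `h ∈ H₀`,
where `Bh = {bh : b ∈ B}`. Then `μG B ∈ {0, 1}`. -/
theorem haar_zero_one_law_of_dense_translations
    {G : Type*} [Group G] [TopologicalSpace G] [IsTopologicalGroup G]
    [CompactSpace G] [TopologicalSpace.MetrizableSpace G] [MeasurableSpace G] [BorelSpace G]
    (μG : Measure G) [μG.IsHaarMeasure] [IsProbabilityMeasure μG]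
    (H₀ : Set G) (hH₀ : Dense H₀)
    (B : Set G) (hB : MeasurableSet B)
    (hinv : ∀ h ∈ H₀, μG (((fun b => b * h) '' B) ∆ B) = 0) :
    μG B = 0 ∨ μG B = 1 := by
  have hd : Dense {g : G | (· * g) ⁻¹' B =ᵐ[μG] B} := by
    refine (hH₀.preimage (Homeomorph.inv G).isOpenMap).mono fun g hg ↦ ?_
    have hg := hinv g⁻¹ hg
    rw [Set.image_mul_right, inv_inv] at hg
    exact measure_symmDiff_eq_zero_iff.1 hg
  exact (aeconst_of_dense_setOf_preimage_mul_right_ae hB.nullMeasurableSet hd)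
    |>.measure_eq_zero_or_one
end

section
/- Let X = (X_t)_{t≥0} be a Lévy process in a metrizable compact group G, and let ξ be a G-valued random variable on the same probability space, independent of X and distributed according to the normalized Haar measure λ_G. Then the process Z = (Z_t)_{t≥0} with Z_t = ξX₀⁻¹X_t is stationary: for every s ≥ 0, every n ∈ ℕ and all 0 ≤ t₁ < … < t_n, the joint distribution of (Z_{s+t₁}, …, Z_{s+t_n}) equals the joint distribution of (Z_{t₁}, …, Z_{t_n}). -/
open MeasureTheory ProbabilityTheory Filter Topology

noncomputable section
/-!
Write `Z_{s+t_i} = (ξ X₀⁻¹ X_{s+t₀}) · (X_{s+t₀}⁻¹ X_{s+t_i})`. Since `ξ` is Haar distributed and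
independent of `X`, right invariance of Haar measure makes the first factor again Haar distributed
and independent of the second. The second factor is the vector of partial products of the
increments of `X` along `s + t`, which are independent with laws depending only on the gaps
`t_{j+1} - t_j`; so its law does not depend on `s`, and neither does the law of `Z_{s+t}`.
-/

lemma Measure.isMulRightInvariant_of_isHaarMeasure {G : Type*} [TopologicalSpace G]
    [Group G] [IsTopologicalGroup G] [CompactSpace G] [MeasurableSpace G] [BorelSpace G]
    (μ : Measure G) [μ.IsHaarMeasure] [IsProbabilityMeasure μ] :
    μ.IsMulRightInvariant := by
  refine ⟨fun g => ?_⟩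
  have : IsProbabilityMeasure (μ.map (· * g)) :=
    Measure.isProbabilityMeasure_map (measurable_mul_const g).aemeasurable
  exact Measure.isHaarMeasure_eq_of_isProbabilityMeasure _ _

lemma measurable_partialProd {M : Type*} [Monoid M] [MeasurableSpace M] [MeasurableMul₂ M]
    {n : ℕ} : Measurable (Fin.partialProd : (Fin n → M) → Fin (n + 1) → M) := by
  refine measurable_pi_lambda _ fun i => Fin.induction ?_ (fun j ih => ?_) i
  · simpa only [Fin.partialProd_zero] using measurable_const
  · simp_rw [Fin.partialProd_succ]
    exact ih.mul (measurable_pi_apply j)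

lemma Fin.partialProd_inv_castSucc_mul_succ {G : Type*} [Group G] {n : ℕ} (f : Fin (n + 1) → G) :
    Fin.partialProd (fun j : Fin n => (f j.castSucc)⁻¹ * f j.succ) = fun i => (f 0)⁻¹ * f i := by
  funext i
  rw [eq_inv_mul_iff_mul_eq]
  exact congrFun (Fin.partialProd_left_inv f) i

section HaarRandomization

variable {Ω α β G : Type*} [MeasurableSpace Ω] [MeasurableSpace α] [MeasurableSpace β]
  [Group G] [MeasurableSpace G] [MeasurableMul₂ G]

theorem map_prod_mul_right_eq_prod_of_indepFun {P : Measure Ω} [IsFiniteMeasure P]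
    {μ : Measure G} [SFinite μ] [μ.IsMulRightInvariant]
    {V : Ω → α} {ξ : Ω → G} {w : α → G} {r : α → β}
    (hV : Measurable V) (hξ : Measurable ξ) (hw : Measurable w) (hr : Measurable r)
    (hξd : P.map ξ = μ) (hind : IndepFun V ξ P) :
    P.map (fun ω => (r (V ω), ξ ω * w (V ω))) = (P.map fun ω => r (V ω)).prod μ := by
  have hpair : P.map (fun ω => (V ω, ξ ω)) = (P.map V).prod μ := by
    rw [← hξd]
    exact (indepFun_iff_map_prod_eq_prod_map_map hV.aemeasurable hξ.aemeasurable).1 hind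
  have hskew : MeasurePreserving (fun p : α × G => (r p.1, p.2 * w p.1))
      ((P.map V).prod μ) ((P.map fun ω => r (V ω)).prod μ) :=
    MeasurePreserving.skew_product ⟨hr, Measure.map_map hr hV⟩
      (measurable_snd.mul (hw.comp measurable_fst))
      (ae_of_all _ fun a => map_mul_right_eq_self μ (w a))
  rw [← hskew.map_eq, ← hpair, Measure.map_map hskew.measurable (hV.prodMk hξ)]
  rfl

variable [MeasurableInv G]

theorem map_haar_mul_inv_mul_eq {P : Measure Ω} [IsFiniteMeasure P]
    {μ : Measure G} [SFinite μ] [μ.IsMulRightInvariant]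
    {X : ℝ → Ω → G} (hX : ∀ t, 0 ≤ t → Measurable (X t))
    {ξ : Ω → G} (hξ : Measurable ξ) (hξd : P.map ξ = μ)
    (hind : ∀ (n : ℕ) (t : Fin n → ℝ), (∀ i, 0 ≤ t i) →
      IndepFun ξ (fun ω (i : Fin n) => X (t i) ω) P)
    {m : ℕ} (u : Fin (m + 1) → ℝ) (hu : ∀ i, 0 ≤ u i) :
    P.map (fun ω i => ξ ω * (X 0 ω)⁻¹ * X (u i) ω) =
      ((P.map fun ω i => (X (u 0) ω)⁻¹ * X (u i) ω).prod μ).map fun p i => p.2 * p.1 i := by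
  -- prepend the time `0`, so that a single independence hypothesis covers both `X₀` and `X_u`
  set τ : Fin (m + 2) → ℝ := Fin.cons 0 u
  have hτ : ∀ i, 0 ≤ τ i := Fin.cases le_rfl hu
  set V : Ω → Fin (m + 2) → G := fun ω i => X (τ i) ω
  have hV : Measurable V := measurable_pi_lambda _ fun i => hX _ (hτ i)
  set w : (Fin (m + 2) → G) → G := fun y => (y 0)⁻¹ * y 1
  set r : (Fin (m + 2) → G) → Fin (m + 1) → G := fun y i => (y 1)⁻¹ * y i.succ
  have hw : Measurable w := (measurable_pi_apply _).inv.mul (measurable_pi_apply _)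
  have hr : Measurable r :=
    measurable_pi_lambda _ fun i => (measurable_pi_apply _).inv.mul (measurable_pi_apply _)
  have hmul : Measurable fun p : (Fin (m + 1) → G) × G => fun i => p.2 * p.1 i :=
    measurable_pi_lambda _ fun i => measurable_snd.mul ((measurable_pi_apply i).comp measurable_fst)
  have hsplit : (fun ω i => ξ ω * (X 0 ω)⁻¹ * X (u i) ω) =
      (fun p : (Fin (m + 1) → G) × G => fun i => p.2 * p.1 i) ∘
        fun ω => (r (V ω), ξ ω * w (V ω)) := by
    funext ω i
    simp only [Function.comp_apply, V, w, r, τ, Fin.cons_zero, Fin.cons_succ,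
      ← Fin.succ_zero_eq_one]
    group
  have hpair : Measurable fun ω => (r (V ω), ξ ω * w (V ω)) :=
    (hr.comp hV).prodMk (hξ.mul (hw.comp hV))
  rw [hsplit, ← Measure.map_map hmul hpair,
    map_prod_mul_right_eq_prod_of_indepFun hV hξ hw hr hξd (hind _ τ hτ).symm]
  rfl

end HaarRandomization

namespace IsLevyProcess

variable {Ω G : Type*} [MeasurableSpace Ω] [TopologicalSpace G] [Group G] [MeasurableSpace G]
  [MeasurableMul₂ G] [MeasurableInv G] {P : Measure Ω} [IsProbabilityMeasure P] {X : ℝ → Ω → G}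

theorem map_inv_mul_eq_map_partialProd (hX : IsLevyProcess P X) {m : ℕ}
    (u : Fin (m + 1) → ℝ) (hu0 : 0 ≤ u 0) (hu : StrictMono u) :
    P.map (fun ω i => (X (u 0) ω)⁻¹ * X (u i) ω) =
      (Measure.pi fun j : Fin m =>
        P.map fun ω => (X 0 ω)⁻¹ * X (u j.succ - u j.castSucc) ω).map Fin.partialProd := by
  have hnonneg : ∀ i, 0 ≤ u i := fun i => hu0.trans (hu.monotone (Fin.zero_le i))
  set incr : Fin m → Ω → G := fun j ω => (X (u j.castSucc) ω)⁻¹ * X (u j.succ) ω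
  have hincr : ∀ j, Measurable (incr j) := fun j =>
    (hX.measurable _ (hnonneg _)).inv.mul (hX.measurable _ (hnonneg _))
  have hindep : iIndepFun (m := fun _ => ‹MeasurableSpace G›) incr P := by
    simpa using (hX.indep m u hu0 hu).precomp (Fin.succ_injective m)
  have hincr_law : ∀ j, P.map (incr j) =
      P.map fun ω => (X 0 ω)⁻¹ * X (u j.succ - u j.castSucc) ω := fun j =>
    hX.stationary _ _ (hnonneg _) (hu Fin.castSucc_lt_succ)
  have htelescope : (fun ω i => (X (u 0) ω)⁻¹ * X (u i) ω) =
      Fin.partialProd ∘ fun ω j => incr j ω := by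
    funext ω
    exact (Fin.partialProd_inv_castSucc_mul_succ fun i => X (u i) ω).symm
  rw [htelescope, ← Measure.map_map measurable_partialProd (measurable_pi_lambda _ hincr),
    (iIndepFun_iff_map_fun_eq_pi_map fun j => (hincr j).aemeasurable).1 hindep]
  simp_rw [hincr_law]

theorem map_inv_mul_add_eq (hX : IsLevyProcess P X) {m : ℕ} {s : ℝ} (hs : 0 ≤ s)
    (t : Fin (m + 1) → ℝ) (ht0 : 0 ≤ t 0) (ht : StrictMono t) :
    P.map (fun ω i => (X (s + t 0) ω)⁻¹ * X (s + t i) ω) =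
      P.map fun ω i => (X (t 0) ω)⁻¹ * X (t i) ω := by
  rw [hX.map_inv_mul_eq_map_partialProd (fun i => s + t i) (add_nonneg hs ht0)
      fun a b hab => add_lt_add_right (ht hab) s,
    hX.map_inv_mul_eq_map_partialProd t ht0 ht]
  simp_rw [add_sub_add_left_eq_sub]

end IsLevyProcess

/-- Let `X` be a Lévy process in a metrizable compact group `G`, and let `ξ` be a
`G`-valued random variable, independent of the process `X`, with distribution the
normalized Haar measure `μG`. Then the process `Z_t = ξ X₀⁻¹ X_t` is stationary: for all
`s ≥ 0`, `n ∈ ℕ` and `0 ≤ t₁ < … < t_n`, the joint law of `(Z_{s+t₁}, …, Z_{s+t_n})`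
equals the joint law of `(Z_{t₁}, …, Z_{t_n})`. -/
theorem haar_randomized_levy_is_stationary
    {Ω G : Type*} [MeasurableSpace Ω]
    [TopologicalSpace G] [Group G] [IsTopologicalGroup G]
    [CompactSpace G] [TopologicalSpace.MetrizableSpace G] [MeasurableSpace G] [BorelSpace G]
    (P : Measure Ω) [IsProbabilityMeasure P]
    (μG : Measure G) [μG.IsHaarMeasure] [IsProbabilityMeasure μG]
    (X : ℝ → Ω → G) (hX : IsLevyProcess P X)
    (ξ : Ω → G) (hξm : Measurable ξ) (hξd : P.map ξ = μG)
    (hξindep : ∀ (n : ℕ) (t : Fin n → ℝ), (∀ i, 0 ≤ t i) →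
      IndepFun ξ (fun ω (i : Fin n) => X (t i) ω) P) :
    ∀ s : ℝ, 0 ≤ s → ∀ (n : ℕ) (t : Fin n → ℝ), (∀ i, 0 ≤ t i) → StrictMono t →
      P.map (fun ω (i : Fin n) => ξ ω * (X 0 ω)⁻¹ * X (s + t i) ω) =
        P.map (fun ω (i : Fin n) => ξ ω * (X 0 ω)⁻¹ * X (t i) ω) := by
  have : μG.IsMulRightInvariant := Measure.isMulRightInvariant_of_isHaarMeasure μG
  intro s hs n t ht hmono
  obtain _ | m := n
  · congr 1
    funext ω i
    exact i.elim0
  have hZ := map_haar_mul_inv_mul_eq (m := m) hX.measurable hξm hξd hξindep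
  calc P.map (fun ω i => ξ ω * (X 0 ω)⁻¹ * X (s + t i) ω)
      = ((P.map fun ω i => (X (s + t 0) ω)⁻¹ * X (s + t i) ω).prod μG).map
          fun p i => p.2 * p.1 i := hZ (fun i => s + t i) fun i => add_nonneg hs (ht i)
    _ = ((P.map fun ω i => (X (t 0) ω)⁻¹ * X (t i) ω).prod μG).map fun p i => p.2 * p.1 i := by
      rw [hX.map_inv_mul_add_eq hs t (ht 0) hmono]
    _ = P.map fun ω i => ξ ω * (X 0 ω)⁻¹ * X (t i) ω := (hZ t ht).symm
end
end

section
/- Let (B_t)_{t≥0} be a standard one-dimensional Brownian motion, i.e., a real-valued stochastic process with B₀ = 0, almost surely continuous paths, independent increments, and B_t − B_s normally distributed with mean 0 and variance t − s for 0 ≤ s < t. Then, with probability one, the path t ↦ ⟨B_t⟩ of its fractional parts is continuously uniformly distributed in 𝕋 = ℝ/ℤ: for every continuous φ : 𝕋 → ℂ, (1/T)∫₀^T φ(⟨B_t⟩) dt → ∫_𝕋 φ dλ_𝕋 as T → +∞, where λ_𝕋 is the normalized Haar measure on 𝕋. -/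
open MeasureTheory ProbabilityTheory Filter Topology

noncomputable section

/-- A standard one-dimensional Brownian motion: `B₀ = 0`, almost surely continuous paths
on `[0,∞)`, independent increments, and `B_t − B_s ~ N(0, t − s)` for `0 ≤ s < t`. -/
structure IsStdBrownianMotion {Ω : Type*} [MeasurableSpace Ω]
    (P : MeasureTheory.Measure Ω) (B : ℝ → Ω → ℝ) : Prop where
  measurable : ∀ t : ℝ, 0 ≤ t → Measurable (B t)
  init : ∀ ω, B 0 ω = 0
  cont : ∀ᵐ ω ∂P, ContinuousOn (fun t => B t ω) (Set.Ici 0)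
  indep : ∀ (n : ℕ) (t : Fin (n + 1) → ℝ), 0 ≤ t 0 → StrictMono t →
    iIndepFun
      (fun (i : Fin n) (ω : Ω) => B (t i.succ) ω - B (t i.castSucc) ω) P
  gauss : ∀ s t : ℝ, 0 ≤ s → s < t →
    P.map (fun ω => B t ω - B s ω) =
      ProbabilityTheory.gaussianReal 0 (Real.toNNReal (t - s))

/-!
By Weyl's criterion it suffices that, almost surely, `(1/T) ∫₀^T exp (2πinB_t) dt → 0` for every
`n ≠ 0`. For `c ≠ 0` the Gaussian characteristic function gives
`E[exp (ic(B_s - B_t))] = exp (-c²|s - t|/2)`, so the second moment of the average of `exp (icB_t)`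
over `(0, T]` is `O(1/T)`. Along `T = n²` these moments are summable, which gives almost sure
convergence by Borel–Cantelli; as the integrand has modulus `1`, the averages between consecutive
squares stay close to those at the squares. Fubini needs a jointly measurable process, so the
argument is run on a version of `B` whose paths are all continuous.
-/

open Set Function
open Complex (I)
open scoped ComplexConjugate Complex Real ENNReal NNReal

section TimeAverage

variable {E : Type*} [NormedAddCommGroup E] [NormedSpace ℝ E]

def timeAverage (f : ℝ → E) (T : ℝ) : E := (1 / T) • ∫ t in Ioc 0 T, f t

lemma timeAverage_congr {f g : ℝ → E} (h : EqOn f g (Ioi 0)) : timeAverage f = timeAverage g :=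
  funext fun T => by
    rw [timeAverage, timeAverage, setIntegral_congr_fun measurableSet_Ioc fun t ht => h ht.1]

lemma timeAverage_const [CompleteSpace E] (c : E) {T : ℝ} (hT : 0 < T) :
    timeAverage (fun _ => c) T = c := by
  rw [timeAverage, setIntegral_const, Real.volume_real_Ioc_of_le hT.le, sub_zero, smul_smul,
    one_div_mul_cancel hT.ne', one_smul]

lemma norm_timeAverage_le {f : ℝ → E} {C : ℝ} (hfC : ∀ t, ‖f t‖ ≤ C) (T : ℝ) :
    ‖timeAverage f T‖ ≤ C := by
  rcases le_or_gt T 0 with hT | hT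
  · simpa [timeAverage, Ioc_eq_empty_of_le hT] using (norm_nonneg _).trans (hfC 0)
  · have := norm_setIntegral_le_of_norm_le_const (μ := volume) (s := Ioc 0 T) (by simp)
      fun t _ => hfC t
    rw [Real.volume_real_Ioc_of_le hT.le, sub_zero] at this
    rw [timeAverage, norm_smul, one_div, norm_inv, Real.norm_of_nonneg hT.le]
    calc T⁻¹ * ‖∫ t in Ioc 0 T, f t‖ ≤ T⁻¹ * (C * T) := by gcongr
      _ = C := by field_simp

lemma norm_timeAverage_le_of_le {f : ℝ → E} {C : ℝ} (hf : ∀ T, IntegrableOn f (Ioc 0 T))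
    (hfC : ∀ t, ‖f t‖ ≤ C) {S T : ℝ} (hS : 0 < S) (hST : S ≤ T) :
    ‖timeAverage f T‖ ≤ ‖timeAverage f S‖ + C * (T - S) / S := by
  have hT : 0 < T := hS.trans_le hST
  have hint : ∀ a b : ℝ, 0 ≤ a → 0 ≤ b → IntervalIntegrable f volume a b := fun a b ha hb =>
    intervalIntegrable_iff.2 ((hf (max a b)).mono_set (Ioc_subset_Ioc (le_min ha hb) le_rfl))
  have hsplit : ∫ t in Ioc 0 T, f t = (∫ t in Ioc 0 S, f t) + ∫ t in S..T, f t := by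
    rw [← intervalIntegral.integral_of_le hT.le, ← intervalIntegral.integral_of_le hS.le,
      intervalIntegral.integral_add_adjacent_intervals (hint 0 S le_rfl hS.le)
        (hint S T hS.le hT.le)]
  have htail : ‖∫ t in S..T, f t‖ ≤ C * (T - S) := by
    simpa [abs_of_nonneg (sub_nonneg.2 hST)] using
      intervalIntegral.norm_integral_le_of_norm_le_const (a := S) (b := T) fun t _ => hfC t
  have hC : 0 ≤ C := (norm_nonneg _).trans (hfC 0)
  simp only [timeAverage, norm_smul, one_div, norm_inv, Real.norm_of_nonneg hS.le,
    Real.norm_of_nonneg hT.le, hsplit]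
  calc T⁻¹ * ‖(∫ t in Ioc 0 S, f t) + ∫ t in S..T, f t‖
      ≤ T⁻¹ * (‖∫ t in Ioc 0 S, f t‖ + C * (T - S)) := by
        gcongr; exact (norm_add_le _ _).trans (by gcongr)
    _ ≤ S⁻¹ * (‖∫ t in Ioc 0 S, f t‖ + C * (T - S)) := by
        gcongr
    _ = S⁻¹ * ‖∫ t in Ioc 0 S, f t‖ + C * (T - S) / S := by ring

/-- Consecutive squares have ratio tending to `1`, so for bounded `f` the averages in between
are close to those at the neighbouring squares. -/
theorem tendsto_timeAverage_of_tendsto_sq {f : ℝ → E} {C : ℝ}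
    (hf : ∀ T, IntegrableOn f (Ioc 0 T)) (hfC : ∀ t, ‖f t‖ ≤ C)
    (h : Tendsto (fun n : ℕ => timeAverage f (n ^ 2)) atTop (𝓝 0)) :
    Tendsto (timeAverage f) atTop (𝓝 0) := by
  set N : ℝ → ℕ := fun T => ⌊√T⌋₊
  have hN : Tendsto N atTop atTop := tendsto_nat_floor_atTop.comp Real.tendsto_sqrt_atTop
  have hbound : Tendsto (fun n : ℕ => ‖timeAverage f (n ^ 2)‖ + 3 * C / n) atTop (𝓝 0) := by
    simpa using h.norm.add (tendsto_const_div_atTop_nhds_zero_nat (3 * C))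
  refine squeeze_zero_norm' ?_ (hbound.comp hN)
  filter_upwards [eventually_ge_atTop 1] with T hT
  have hn1 : (1 : ℝ) ≤ N T := by
    exact_mod_cast Nat.le_floor (by simpa using Real.sqrt_le_sqrt hT)
  have hlow : (N T : ℝ) ^ 2 ≤ T := by
    have := Nat.floor_le (Real.sqrt_nonneg T)
    nlinarith [Real.sq_sqrt (zero_le_one.trans hT), Real.sqrt_nonneg T]
  have hhigh : T - (N T : ℝ) ^ 2 ≤ 3 * N T := by
    have := Nat.lt_floor_add_one (√T)
    nlinarith [Real.sq_sqrt (zero_le_one.trans hT), Real.sqrt_nonneg T]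
  have hC : 0 ≤ C := (norm_nonneg _).trans (hfC 0)
  calc ‖timeAverage f T‖ ≤ ‖timeAverage f (N T ^ 2)‖ + C * (T - N T ^ 2) / N T ^ 2 :=
        norm_timeAverage_le_of_le hf hfC (by positivity) hlow
    _ ≤ ‖timeAverage f (N T ^ 2)‖ + 3 * C / N T := by
        refine add_le_add_right ?_ _
        rw [div_le_div_iff₀ (by positivity) (by positivity)]
        nlinarith [mul_le_mul_of_nonneg_left hhigh hC]

end TimeAverage

section Weyl

variable {X 𝕜 : Type*} [TopologicalSpace X] [CompactSpace X] [MeasurableSpace X]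
  [OpensMeasurableSpace X] [RCLike 𝕜]

lemma ContinuousMap.integrable (φ : C(X, 𝕜)) (μ : Measure X) [IsFiniteMeasure μ] :
    Integrable φ μ :=
  φ.continuous.integrable_of_hasCompactSupport (.of_compactSpace _)

lemma ContinuousMap.lipschitzWith_integral {μ : Measure X} {K : ℝ≥0} (hμ : μ univ ≤ K) :
    LipschitzWith K fun φ : C(X, 𝕜) => ∫ x, φ x ∂μ := by
  have : IsFiniteMeasure μ := ⟨hμ.trans_lt ENNReal.coe_lt_top⟩
  refine LipschitzWith.of_dist_le_mul fun φ ψ => ?_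
  rw [dist_eq_norm, ← integral_sub (φ.integrable μ) (ψ.integrable μ)]
  calc ‖∫ x, (φ x - ψ x) ∂μ‖ ≤ dist φ ψ * μ.real univ :=
        norm_integral_le_of_norm_le_const (Eventually.of_forall fun x =>
          (dist_eq_norm (φ x) (ψ x)).symm.trans_le (ContinuousMap.dist_apply_le_dist x))
    _ ≤ K * dist φ ψ := by
        rw [mul_comm]
        gcongr
        exact ENNReal.toReal_le_of_le_ofReal K.coe_nonneg (by simpa using hμ)

theorem tendsto_integral_of_dense_span {s : Set C(X, 𝕜)}
    (hs : (Submodule.span 𝕜 s).topologicalClosure = ⊤) {ι : Type*} {l : Filter ι}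
    {ν : ι → Measure X} (hν : ∀ i, ν i univ ≤ 1) {μ : Measure X} [IsFiniteMeasure μ]
    (h : ∀ ψ ∈ s, Tendsto (fun i => ∫ x, ψ x ∂ν i) l (𝓝 (∫ x, ψ x ∂μ))) (φ : C(X, 𝕜)) :
    Tendsto (fun i => ∫ x, φ x ∂ν i) l (𝓝 (∫ x, φ x ∂μ)) := by
  have : ∀ i, IsFiniteMeasure (ν i) := fun i => ⟨(hν i).trans_lt ENNReal.one_lt_top⟩
  let S : Submodule 𝕜 C(X, 𝕜) :=
    { carrier := {φ | Tendsto (fun i => ∫ x, φ x ∂ν i) l (𝓝 (∫ x, φ x ∂μ))}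
      zero_mem' := by simpa using tendsto_const_nhds
      add_mem' := fun {φ ψ} hφ hψ => by
        have hadd : ∀ ν : Measure X, IsFiniteMeasure ν →
            ∫ x, (φ + ψ) x ∂ν = ∫ x, φ x ∂ν + ∫ x, ψ x ∂ν := fun ν _ =>
          integral_add (φ.integrable ν) (ψ.integrable ν)
        simpa only [mem_ofPred_eq, hadd] using hφ.add hψ
      smul_mem' := fun c φ hφ => by
        simpa only [mem_ofPred_eq, ContinuousMap.smul_apply, integral_smul] using hφ.const_smul c }
  have hequi : Equicontinuous fun i (φ : C(X, 𝕜)) => ∫ x, φ x ∂ν i :=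
    (LipschitzWith.uniformEquicontinuous _ 1 fun i =>
      ContinuousMap.lipschitzWith_integral (by simpa using hν i)).equicontinuous
  have hclosed : IsClosed (S : Set C(X, 𝕜)) :=
    hequi.isClosed_setOfPred_tendsto (ContinuousMap.lipschitzWith_integral
      (K := (μ univ).toNNReal) (ENNReal.coe_toNNReal (measure_ne_top μ univ)).ge).continuous
  have hS : ⊤ ≤ S := hs ▸ Submodule.topologicalClosure_minimal _ (Submodule.span_le.2 h) hclosed
  exact hS Submodule.mem_top

end Weyl

section Empirical

variable {X : Type*} [MeasurableSpace X]

def empiricalMeasure (γ : ℝ → X) (T : ℝ) : Measure X :=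
  (ENNReal.ofReal T)⁻¹ • (volume.restrict (Ioc 0 T)).map γ

lemma empiricalMeasure_univ_le {γ : ℝ → X} (hγ : Measurable γ) (T : ℝ) :
    empiricalMeasure γ T univ ≤ 1 := by
  rw [empiricalMeasure, Measure.smul_apply, Measure.map_apply hγ MeasurableSet.univ,
    preimage_univ, Measure.restrict_apply_univ, Real.volume_Ioc, sub_zero, smul_eq_mul]
  exact ENNReal.inv_mul_le_one _

lemma integral_empiricalMeasure [TopologicalSpace X] [OpensMeasurableSpace X] {γ : ℝ → X}
    (hγ : Measurable γ) (φ : C(X, ℂ)) (T : ℝ) :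
    ∫ x, φ x ∂empiricalMeasure γ T = timeAverage (fun t => φ (γ t)) T := by
  rcases le_or_gt T 0 with hT | hT
  · simp [timeAverage, empiricalMeasure, Ioc_eq_empty_of_le hT]
  · rw [empiricalMeasure, integral_smul_measure,
      integral_map hγ.aemeasurable φ.continuous.aestronglyMeasurable, timeAverage,
      ENNReal.toReal_inv, ENNReal.toReal_ofReal hT.le, one_div]

end Empirical

lemma IsCUD.congr {G : Type*} [TopologicalSpace G] [MeasurableSpace G] {μ : Measure G}
    {γ γ' : ℝ → G} (h : IsCUD μ γ) (hγ : EqOn γ γ' (Ioi 0)) : IsCUD μ γ' := fun φ => by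
  have hφ : Tendsto (timeAverage fun t => φ (γ t)) atTop (𝓝 (∫ x, φ x ∂μ)) := h φ
  rwa [timeAverage_congr fun t ht => congrArg φ (hγ ht)] at hφ

lemma integral_fourier_haarAddCircle {p : ℝ} [Fact (0 < p)] {n : ℤ} (hn : n ≠ 0) :
    ∫ x, fourier n x ∂AddCircle.haarAddCircle (T := p) = 0 :=
  integral_eq_zero_of_add_right_eq_neg (fourier_add_half_inv_index hn Fact.out)

/-- Weyl's criterion for continuous uniform distribution in `AddCircle p`. -/
theorem isCUD_of_tendsto_timeAverage_fourier {p : ℝ} [Fact (0 < p)] {γ : ℝ → AddCircle p}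
    (hγ : Measurable γ)
    (h : ∀ n : ℤ, n ≠ 0 → Tendsto (timeAverage fun t => fourier n (γ t)) atTop (𝓝 0)) :
    IsCUD AddCircle.haarAddCircle γ := by
  refine fun φ => (tendsto_integral_of_dense_span span_fourier_closure_eq_top
    (empiricalMeasure_univ_le hγ) ?_ φ).congr (integral_empiricalMeasure hγ φ)
  rintro _ ⟨n, rfl⟩
  refine Tendsto.congr (fun T => (integral_empiricalMeasure hγ _ T).symm) ?_
  obtain rfl | hn := eq_or_ne n 0
  · simp only [fourier_zero, integral_const, probReal_univ, one_smul]
    exact tendsto_const_nhds.congr' <| (eventually_gt_atTop 0).mono fun T hT =>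
      (timeAverage_const 1 hT).symm
  · rw [integral_fourier_haarAddCircle hn]
    exact h n hn

section SecondMoment

lemma integrable_exp_neg_mul_abs {a : ℝ} (ha : 0 < a) :
    Integrable fun x : ℝ => rexp (-a * |x|) := by
  rw [← integrableOn_univ, ← Iic_union_Ioi (a := 0)]
  refine ((integrableOn_exp_mul_Iic ha 0).congr_fun (fun x hx => ?_) measurableSet_Iic).union
    ((integrableOn_exp_mul_Ioi (neg_neg_of_pos ha) 0).congr_fun (fun x hx => ?_) measurableSet_Ioi)
  · rw [abs_of_nonpos hx, mul_neg, neg_mul, neg_neg]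
  · rw [abs_of_pos hx]

lemma integral_exp_neg_mul_abs {a : ℝ} (ha : 0 < a) : ∫ x : ℝ, rexp (-a * |x|) = 2 / a := by
  rw [integral_comp_abs (f := fun x => rexp (-a * x)), integral_exp_mul_Ioi (neg_neg_of_pos ha),
    mul_zero, Real.exp_zero]
  field_simp

lemma integral_exp_neg_mul_abs_sub_le {a : ℝ} (ha : 0 < a) {S : Set ℝ} (hS : volume S < ∞) :
    ∫ q, rexp (-a * |q.1 - q.2|) ∂(volume.restrict S).prod (volume.restrict S)
      ≤ 2 * volume.real S / a := by
  have : IsFiniteMeasure (volume.restrict S) := isFiniteMeasure_restrict.2 hS.ne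
  have hint : Integrable (fun q : ℝ × ℝ => rexp (-a * |q.1 - q.2|))
      ((volume.restrict S).prod (volume.restrict S)) :=
    Integrable.of_bound (by fun_prop) 1 <| Eventually.of_forall fun q => by
      simpa [abs_of_pos (Real.exp_pos _)] using mul_nonneg ha.le (abs_nonneg (q.1 - q.2))
  have hslice : ∀ s, ∫ t in S, rexp (-a * |s - t|) ≤ 2 / a := fun s => by
    calc ∫ t in S, rexp (-a * |s - t|)
        ≤ ∫ t, rexp (-a * |s - t|) := setIntegral_le_integral
          ((integrable_exp_neg_mul_abs ha).comp_sub_left s)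
          (Eventually.of_forall fun _ => (Real.exp_pos _).le)
      _ = 2 / a := by
          rw [integral_sub_left_eq_self (fun u => rexp (-a * |u|)), integral_exp_neg_mul_abs ha]
  calc ∫ q, rexp (-a * |q.1 - q.2|) ∂(volume.restrict S).prod (volume.restrict S)
      ≤ ∫ _ in S, 2 / a := by
        rw [integral_prod _ hint]
        exact integral_mono hint.integral_prod_left (integrable_const _) hslice
    _ = 2 * volume.real S / a := by
        rw [setIntegral_const, smul_eq_mul]
        ring

variable {Ω α : Type*} [MeasurableSpace Ω] [MeasurableSpace α] {P : Measure Ω}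

lemma ofReal_norm_integral_sq (ν : Measure α) [SFinite ν] (g : α → ℂ) :
    ((‖∫ a, g a ∂ν‖ ^ 2 : ℝ) : ℂ) = ∫ q, g q.1 * conj (g q.2) ∂ν.prod ν := by
  have := integral_prod_mul (μ := ν) (ν := ν) g fun a => conj (g a)
  rw [this, integral_conj, Complex.mul_conj']
  push_cast
  rfl

lemma integral_norm_integral_sq [IsFiniteMeasure P] {ν : Measure α} [IsFiniteMeasure ν]
    {f : α → Ω → ℂ} (hf : Measurable (uncurry f)) {C : ℝ} (hfC : ∀ a ω, ‖f a ω‖ ≤ C) :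
    ∫ ω, ‖∫ a, f a ω ∂ν‖ ^ 2 ∂P = (∫ q, ∫ ω, f q.1 ω * conj (f q.2 ω) ∂P ∂ν.prod ν).re := by
  have hG : Integrable (uncurry fun ω (q : α × α) => f q.1 ω * conj (f q.2 ω))
      (P.prod (ν.prod ν)) := by
    refine Integrable.of_bound ?_ (C * C) (Eventually.of_forall fun ⟨ω, q⟩ => ?_)
    · exact ((hf.comp (measurable_snd.fst.prodMk measurable_fst)).mul
        (Complex.continuous_conj.measurable.comp
          (hf.comp (measurable_snd.snd.prodMk measurable_fst)))).aestronglyMeasurable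
    · simpa only [uncurry_apply_pair, norm_mul, RCLike.norm_conj] using
        mul_le_mul (hfC q.1 ω) (hfC q.2 ω) (norm_nonneg _) ((norm_nonneg _).trans (hfC q.1 ω))
  calc ∫ ω, ‖∫ a, f a ω ∂ν‖ ^ 2 ∂P = (∫ ω, ((‖∫ a, f a ω ∂ν‖ ^ 2 : ℝ) : ℂ) ∂P).re := by
        rw [integral_complex_ofReal, Complex.ofReal_re]
    _ = _ := by simp_rw [ofReal_norm_integral_sq, integral_integral_swap hG]

end SecondMoment

section WeaklyCorrelated

variable {Ω : Type*} [MeasurableSpace Ω] {P : Measure Ω}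

theorem ae_tendsto_zero_of_summable_integral_norm_sq {E : Type*} [NormedAddCommGroup E]
    {Y : ℕ → Ω → E} (hY : ∀ n, Integrable (fun ω => ‖Y n ω‖ ^ 2) P)
    (hsum : Summable fun n => ∫ ω, ‖Y n ω‖ ^ 2 ∂P) :
    ∀ᵐ ω ∂P, Tendsto (fun n => Y n ω) atTop (𝓝 0) := by
  have hmeas : ∀ n, AEMeasurable (fun ω => ENNReal.ofReal (‖Y n ω‖ ^ 2)) P := fun n =>
    (hY n).aemeasurable.ennreal_ofReal
  have hfin : ∫⁻ ω, ∑' n, ENNReal.ofReal (‖Y n ω‖ ^ 2) ∂P ≠ ∞ := by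
    rw [lintegral_tsum hmeas]
    simp_rw [← ofReal_integral_eq_lintegral_ofReal (hY _)
      (Eventually.of_forall fun _ => sq_nonneg _)]
    rw [← ENNReal.ofReal_tsum_of_nonneg (fun n => integral_nonneg fun _ => sq_nonneg _) hsum]
    exact ENNReal.ofReal_ne_top
  filter_upwards [ae_lt_top' (AEMeasurable.tsum hmeas) hfin] with ω hω
  have hsq : Tendsto (fun n => ‖Y n ω‖ ^ 2) atTop (𝓝 0) := by
    simpa [ENNReal.toReal_ofReal (sq_nonneg _)] using
      (ENNReal.summable_toReal hω.ne).tendsto_atTop_zero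
  rw [tendsto_zero_iff_norm_tendsto_zero]
  simpa [Real.sqrt_sq (norm_nonneg _)] using hsq.sqrt

variable [IsFiniteMeasure P] {f : ℝ → Ω → ℂ} {a : ℝ}

lemma integral_norm_timeAverage_sq_le (hf : Measurable (uncurry f)) (hf1 : ∀ t ω, ‖f t ω‖ ≤ 1)
    (ha : 0 < a)
    (hcorr : ∀ s t, 0 < s → 0 < t → ‖∫ ω, f s ω * conj (f t ω) ∂P‖ ≤ rexp (-a * |s - t|))
    {T : ℝ} (hT : 0 < T) :
    ∫ ω, ‖timeAverage (f · ω) T‖ ^ 2 ∂P ≤ 2 / (a * T) := by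
  set ν := volume.restrict (Ioc (0 : ℝ) T)
  have hmem : ∀ᵐ q ∂ν.prod ν, q ∈ Ioc 0 T ×ˢ Ioc 0 T := by
    rw [Measure.prod_restrict]
    exact ae_restrict_mem (measurableSet_Ioc.prod measurableSet_Ioc)
  have hkernel : Integrable (fun q : ℝ × ℝ => rexp (-a * |q.1 - q.2|)) (ν.prod ν) :=
    Integrable.of_bound (by fun_prop) 1 <| Eventually.of_forall fun q => by
      simpa [abs_of_pos (Real.exp_pos _)] using mul_nonneg ha.le (abs_nonneg (q.1 - q.2))
  have hsecond : ∫ ω, ‖∫ t in Ioc 0 T, f t ω‖ ^ 2 ∂P ≤ 2 * T / a := calc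
    _ = (∫ q, ∫ ω, f q.1 ω * conj (f q.2 ω) ∂P ∂ν.prod ν).re := integral_norm_integral_sq hf hf1
    _ ≤ ‖∫ q, ∫ ω, f q.1 ω * conj (f q.2 ω) ∂P ∂ν.prod ν‖ := Complex.re_le_norm _
    _ ≤ ∫ q, rexp (-a * |q.1 - q.2|) ∂ν.prod ν := norm_integral_le_of_norm_le hkernel <| by
        filter_upwards [hmem] with q hq using hcorr _ _ hq.1.1 hq.2.1
    _ ≤ 2 * T / a := by
        simpa [Real.volume_real_Ioc_of_le hT.le] using
          integral_exp_neg_mul_abs_sub_le ha (S := Ioc 0 T) (by simp)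
  simp_rw [timeAverage, norm_smul, mul_pow]
  rw [integral_const_mul]
  calc ‖1 / T‖ ^ 2 * ∫ ω, ‖∫ t in Ioc 0 T, f t ω‖ ^ 2 ∂P ≤ ‖1 / T‖ ^ 2 * (2 * T / a) := by
        gcongr
    _ = 2 / (a * T) := by
        rw [Real.norm_of_nonneg (by positivity)]
        field_simp

theorem ae_tendsto_timeAverage_of_norm_integral_mul_conj_le (hf : Measurable (uncurry f))
    (hf1 : ∀ t ω, ‖f t ω‖ ≤ 1) (ha : 0 < a)
    (hcorr : ∀ s t, 0 < s → 0 < t → ‖∫ ω, f s ω * conj (f t ω) ∂P‖ ≤ rexp (-a * |s - t|)) :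
    ∀ᵐ ω ∂P, Tendsto (timeAverage (f · ω)) atTop (𝓝 0) := by
  have hpath : ∀ ω, Measurable (f · ω) := fun ω => hf.comp (measurable_id.prodMk measurable_const)
  have hmeas : ∀ T, Measurable fun ω => timeAverage (f · ω) T := fun T =>
    (hf.stronglyMeasurable.integral_prod_left.const_smul _).measurable
  have hsq : ∀ᵐ ω ∂P, Tendsto (fun n : ℕ => timeAverage (f · ω) ((n + 1) ^ 2)) atTop (𝓝 0) := by
    refine ae_tendsto_zero_of_summable_integral_norm_sq (fun n => ?_) ?_
    · refine Integrable.of_bound ((hmeas _).norm.pow_const 2).aestronglyMeasurable 1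
        (Eventually.of_forall fun ω => ?_)
      simpa using norm_timeAverage_le (hf1 · ω) _
    · refine Summable.of_nonneg_of_le (fun n => integral_nonneg fun _ => sq_nonneg _)
        (fun n => integral_norm_timeAverage_sq_le hf hf1 ha hcorr (by positivity)) ?_
      refine (((summable_nat_add_iff 1).2 (Real.summable_nat_pow_inv.2 one_lt_two)).mul_left
        (2 / a)).congr fun n => ?_
      push_cast
      field_simp
  filter_upwards [hsq] with ω hω
  refine tendsto_timeAverage_of_tendsto_sq (C := 1) (fun T => ?_) (hf1 · ω) ?_
  · exact Integrable.of_bound (hpath ω).aestronglyMeasurable 1 (Eventually.of_forall (hf1 · ω))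
  · rw [← tendsto_add_atTop_iff_nat 1]
    simpa using hω

end WeaklyCorrelated

section Brownian

variable {Ω : Type*} [MeasurableSpace Ω] {P : Measure Ω}

theorem exists_measurable_continuous_version {E : Type*} [TopologicalSpace E]
    [TopologicalSpace.PseudoMetrizableSpace E] [SecondCountableTopology E] [MeasurableSpace E]
    [BorelSpace E] [Zero E] {X : ℝ → Ω → E} (hX : ∀ t, 0 ≤ t → Measurable (X t))
    (hcont : ∀ᵐ ω ∂P, ContinuousOn (X · ω) (Ici 0)) :
    ∃ Y : ℝ → Ω → E, Measurable (uncurry Y) ∧ (∀ ω, Continuous (Y · ω)) ∧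
      ∀ᵐ ω ∂P, ∀ t, 0 ≤ t → Y t ω = X t ω := by
  set N := toMeasurable P {ω | ¬ContinuousOn (X · ω) (Ici 0)}
  have hN : ∀ᵐ ω ∂P, ω ∉ N := measure_eq_zero_iff_ae_notMem.1 <| by
    rw [measure_toMeasurable]
    exact hcont
  have hcontN : ∀ ω ∉ N, ContinuousOn (X · ω) (Ici 0) := fun ω hω => by
    by_contra h
    exact hω (subset_toMeasurable _ _ h)
  set Y : ℝ → Ω → E := fun t => Nᶜ.indicator (X (max t 0))
  have hYc : ∀ ω, Continuous (Y · ω) := fun ω => by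
    by_cases hω : ω ∈ N
    · simp only [Y, indicator_of_notMem (notMem_compl_iff.2 hω), continuous_const]
    · simp only [Y, indicator_of_mem (mem_compl hω)]
      exact (hcontN ω hω).comp_continuous (continuous_id.max continuous_const)
        fun t => le_max_right t 0
  refine ⟨Y, ?_, hYc, ?_⟩
  · exact (stronglyMeasurable_uncurry_of_continuous_of_stronglyMeasurable hYc fun t =>
      ((hX _ (le_max_right t 0)).indicator
        (measurableSet_toMeasurable _ _).compl).stronglyMeasurable).measurable
  · filter_upwards [hN] with ω hω t ht
    simp only [Y, indicator_of_mem (mem_compl hω), max_eq_left ht]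

variable [IsProbabilityMeasure P] {B : ℝ → Ω → ℝ}

lemma IsStdBrownianMotion.integral_cexp_increment (hB : IsStdBrownianMotion P B) {s t : ℝ}
    (hs : 0 ≤ s) (ht : 0 ≤ t) (c : ℝ) :
    ∫ ω, cexp (c * (B t ω - B s ω : ℝ) * I) ∂P = rexp (-(c ^ 2 / 2) * |t - s|) := by
  wlog hst : s ≤ t generalizing s t c
  · convert this ht hs (-c) (le_of_not_ge hst) using 3
    · push_cast
      ring_nf
    · rw [abs_sub_comm, neg_sq]
  rcases hst.eq_or_lt with rfl | hlt
  · simp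
  · rw [← integral_map (φ := fun ω => B t ω - B s ω) (f := fun x : ℝ => cexp (c * x * I))
      ((hB.measurable t ht).sub (hB.measurable s hs)).aemeasurable (by fun_prop),
      hB.gauss s t hs hlt, ← charFun_apply_real, charFun_gaussianReal,
      Real.coe_toNNReal _ (sub_nonneg.2 hst), abs_of_nonneg (sub_nonneg.2 hst)]
    push_cast
    ring_nf

/-- The correlations `E[exp (i c (B_s - B_t))] = exp (-c² |s - t| / 2)` decay exponentially. -/
theorem IsStdBrownianMotion.ae_tendsto_timeAverage_cexp (hB : IsStdBrownianMotion P B) {c : ℝ}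
    (hc : c ≠ 0) : ∀ᵐ ω ∂P, Tendsto (timeAverage fun t => cexp (c * B t ω * I)) atTop (𝓝 0) := by
  obtain ⟨Y, hYm, -, hYB⟩ := exists_measurable_continuous_version hB.measurable hB.cont
  have hcorr : ∀ s t, 0 < s → 0 < t →
      ‖∫ ω, cexp (c * Y s ω * I) * conj (cexp (c * Y t ω * I)) ∂P‖
        ≤ rexp (-(c ^ 2 / 2) * |s - t|) := by
    intro s t hs ht
    have hYB' : (fun ω => cexp (c * Y s ω * I) * conj (cexp (c * Y t ω * I)))
        =ᵐ[P] fun ω => cexp (c * (B s ω - B t ω : ℝ) * I) := by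
      filter_upwards [hYB] with ω hω
      rw [hω s hs.le, hω t ht.le, ← Complex.exp_conj, ← Complex.exp_add]
      simp only [map_mul, Complex.conj_ofReal, Complex.conj_I]
      push_cast
      ring_nf
    rw [integral_congr_ae hYB', hB.integral_cexp_increment ht.le hs.le, Complex.norm_real,
      Real.norm_of_nonneg (Real.exp_pos _).le]
  have hf : Measurable (uncurry fun t ω => cexp (c * Y t ω * I)) := by fun_prop
  filter_upwards [ae_tendsto_timeAverage_of_norm_integral_mul_conj_le hf
    (fun t ω => by simp [Complex.norm_exp]) (by positivity) hcorr, hYB] with ω hω hωB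
  rwa [timeAverage_congr fun t ht => by rw [hωB t (le_of_lt ht)]] at hω

theorem IsStdBrownianMotion.ae_tendsto_timeAverage_fourier (hB : IsStdBrownianMotion P B) :
    ∀ᵐ ω ∂P, ∀ n : ℤ, n ≠ 0 →
      Tendsto (timeAverage fun t => fourier n (B t ω : UnitAddCircle)) atTop (𝓝 0) := by
  refine ae_all_iff.2 fun n => ?_
  rcases eq_or_ne n 0 with rfl | hn
  · exact Eventually.of_forall fun _ h => (h rfl).elim
  · have hc : 2 * π * n ≠ 0 := by positivity
    filter_upwards [hB.ae_tendsto_timeAverage_cexp hc] with ω hω _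
    convert hω using 3 with t
    rw [fourier_coe_apply]
    push_cast
    ring_nf

end Brownian

lemma UnitAddCircle.volume_eq_haarAddCircle :
    (volume : Measure UnitAddCircle) = AddCircle.haarAddCircle := by
  rw [AddCircle.volume_eq_smul_haarAddCircle, ENNReal.ofReal_one, one_smul]

/-- With probability one, the path of fractional parts `t ↦ ⟨B_t⟩` of a standard Brownian
motion is continuously uniformly distributed in `𝕋 = ℝ/ℤ` (whose normalized Haar measure
is `volume`). -/
theorem brownian_motion_fractional_parts_cud
    {Ω : Type*} [MeasurableSpace Ω]
    (P : Measure Ω) [IsProbabilityMeasure P]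
    (B : ℝ → Ω → ℝ) (hB : IsStdBrownianMotion P B) :
    ∀ᵐ ω ∂P, IsCUD (volume : Measure UnitAddCircle) (fun t => (↑(B t ω) : UnitAddCircle)) := by
  filter_upwards [hB.ae_tendsto_timeAverage_fourier, hB.cont] with ω hω hcont
  -- `B · ω` is only known to be continuous on `[0, ∞)`, so clamp the time to get a measurable path.
  have hγ : Continuous fun t => (B (max t 0) ω : UnitAddCircle) :=
    (AddCircle.continuous_mk' 1).comp <|
      hcont.comp_continuous (continuous_id.max continuous_const) fun t => le_max_right t 0
  have hclamp : EqOn (fun t => (B (max t 0) ω : UnitAddCircle)) (fun t => (B t ω : UnitAddCircle))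
      (Ioi 0) := fun t ht => by simp only [max_eq_left (mem_Ioi.1 ht).le]
  rw [UnitAddCircle.volume_eq_haarAddCircle]
  refine (isCUD_of_tendsto_timeAverage_fourier hγ.measurable fun n hn => ?_).congr hclamp
  rw [timeAverage_congr fun t ht => congrArg (fourier n) (hclamp ht)]
  exact hω n hn
end
end

section
/- Let G be a metrizable compact group and let X = (X_t)_{t≥0} be a jointly measurable G-valued stochastic process with stationary and independent increments (properties (1) and (2) of a Lévy process, with joint measurability of (t,ω) ↦ X_t(ω) replacing the rcll path property). For t ≥ 0 let μ_t be the distribution of X₀⁻¹X_t. Then μ_t converges weakly to the Dirac measure ε_{e_G} at the identity as t ↓ 0; equivalently, for every ε > 0, μ_t({g ∈ G : d(e_G, g) > ε}) → 0 as t ↓ 0, where d is a translation-invariant metric on G. -/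
/-!
By left invariance and stationarity, the mean distance `m(t) = ∫ d(e, g) dμ_t` equals
`E d(X_{s+t}, X_s)` for every `s ≥ 0`, hence also its average over `s ∈ [0, 1]`. For any jointly
measurable process in a compact metric space this average tends to `0` with `t`: a finite
`δ`-net `T` gives `d(x, y) ≤ δ + ∑_{c ∈ T} |d(x, c) - d(y, c)|`, and for each bounded measurable
path `f = d(X_·(ω), c)` continuity of translation in `L¹` gives `∫₀¹ |f(s + t) - f(s)| ds → 0`,
after which dominated convergence in `ω` applies. Markov's inequality turns `m(t) → 0` into the
claim.
-/

open MeasureTheory ProbabilityTheory Filter Topology Set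

theorem MeasureTheory.Integrable.tendsto_integral_norm_add_sub {G E : Type*} [AddGroup G]
    [TopologicalSpace G] [IsTopologicalAddGroup G] [MeasurableSpace G] [BorelSpace G]
    [NormedAddCommGroup E] {μ : Measure G} [μ.IsAddLeftInvariant] [IsLocallyFiniteMeasure μ]
    [μ.InnerRegularCompactLTTop] {f : G → E} (hf : Integrable f μ) :
    Tendsto (fun u => ∫ x, ‖f (u + x) - f x‖ ∂μ) (𝓝 0) (𝓝 0) := by
  have : Fact ((1 : ENNReal) ≠ ⊤) := ⟨ENNReal.one_ne_top⟩
  generalize hF : hf.toL1 f = F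
  have hdist : ∀ u, dist (DomAddAct.mk u +ᵥ F) F = ∫ x, ‖f (u + x) - f x‖ ∂μ := by
    intro u
    rw [dist_eq_norm, L1.norm_eq_integral_norm]
    refine integral_congr_ae ?_
    filter_upwards [Lp.coeFn_sub (DomAddAct.mk u +ᵥ F) F,
      DomAddAct.vadd_Lp_ae_eq (DomAddAct.mk u) F, hF ▸ hf.coeFn_toL1,
      (measurePreserving_add_left μ u).quasiMeasurePreserving.ae (hF ▸ hf.coeFn_toL1)]
      with x hsub hvadd hx hux
    rw [hsub, Pi.sub_apply, hvadd, Equiv.symm_apply_apply, vadd_eq_add, hx, hux]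
  have hcont : Continuous fun u : G => DomAddAct.mk u +ᵥ F :=
    DomAddAct.continuous_mk.vadd continuous_const
  simpa [hdist] using (hcont.tendsto 0).dist (tendsto_const_nhds (x := F))

theorem MeasureTheory.LocallyIntegrable.tendsto_setIntegral_norm_add_sub {E : Type*}
    [NormedAddCommGroup E] {f : ℝ → E} (hf : LocallyIntegrable f) (a b : ℝ) :
    Tendsto (fun u => ∫ s in Icc a b, ‖f (u + s) - f s‖) (𝓝 0) (𝓝 0) := by
  set g := (Icc (a - 1) (b + 1)).indicator f
  have hg : Integrable g :=
    (hf.integrableOn_isCompact isCompact_Icc).integrable_indicator measurableSet_Icc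
  refine squeeze_zero' (Eventually.of_forall fun u =>
    setIntegral_nonneg measurableSet_Icc fun _ _ => norm_nonneg _) ?_
    hg.tendsto_integral_norm_add_sub
  filter_upwards [Ioo_mem_nhds (neg_lt_zero.2 one_pos) one_pos] with u hu
  have hfg : EqOn (fun s => ‖f (u + s) - f s‖) (fun s => ‖g (u + s) - g s‖) (Icc a b) := by
    intro s hs
    have hus : u + s ∈ Icc (a - 1) (b + 1) :=
      ⟨by linarith [hu.1, hs.1], by linarith [hu.2, hs.2]⟩
    have hs' : s ∈ Icc (a - 1) (b + 1) := ⟨by linarith [hs.1], by linarith [hs.2]⟩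
    simp only [g, indicator_of_mem hus, indicator_of_mem hs']
  rw [setIntegral_congr_fun measurableSet_Icc hfg]
  exact setIntegral_le_integral ((hg.comp_add_left u).sub hg).norm
    (ae_of_all _ fun _ => norm_nonneg _)

theorem exists_finset_dist_le_add_sum_abs_dist_sub (M : Type*) [PseudoMetricSpace M]
    [CompactSpace M] {δ : ℝ} (hδ : 0 < δ) :
    ∃ T : Finset M, ∀ x y : M, dist x y ≤ δ + ∑ c ∈ T, |dist x c - dist y c| := by
  obtain ⟨T, -, hT, hcover⟩ :=
    finite_cover_balls_of_compact (isCompact_univ (X := M)) (half_pos hδ)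
  refine ⟨hT.toFinset, fun x y => ?_⟩
  obtain ⟨c, hc, hxc⟩ := mem_iUnion₂.1 (hcover (mem_univ x))
  have hxc' : dist x c < δ / 2 := hxc
  calc dist x y ≤ 2 * dist x c + (dist y c - dist x c) := by
        linarith [dist_triangle_right x y c]
    _ ≤ δ + |dist x c - dist y c| := by
        linarith [neg_abs_le (dist x c - dist y c)]
    _ ≤ δ + ∑ c ∈ hT.toFinset, |dist x c - dist y c| := by
        gcongr
        exact Finset.single_le_sum (f := fun c => |dist x c - dist y c|)
          (fun _ _ => abs_nonneg _) (hT.mem_toFinset.2 hc)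

section
variable {Ω : Type*} [MeasurableSpace Ω] (P : Measure Ω) [IsFiniteMeasure P]

theorem tendsto_integral_prod_abs_add_sub {F : ℝ × Ω → ℝ} (hF : Measurable F) {C : ℝ}
    (hC : ∀ p, |F p| ≤ C) (a b : ℝ) :
    Tendsto (fun u => ∫ p, |F (u + p.1, p.2) - F p| ∂(volume.restrict (Icc a b)).prod P)
      (𝓝 0) (𝓝 0) := by
  have hmeas : ∀ u : ℝ, Measurable fun p : ℝ × Ω => |F (u + p.1, p.2) - F p| := fun u =>
    ((hF.comp ((measurable_const.add measurable_fst).prodMk measurable_snd)).sub hF).abs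
  have hbound : ∀ u s ω, ‖|F (u + s, ω) - F (s, ω)|‖ ≤ 2 * C := fun u s ω => by
    rw [norm_abs_eq_norm, Real.norm_eq_abs]
    linarith [abs_sub (F (u + s, ω)) (F (s, ω)), hC (u + s, ω), hC (s, ω)]
  have hfubini : ∀ u, ∫ p, |F (u + p.1, p.2) - F p| ∂(volume.restrict (Icc a b)).prod P
      = ∫ ω, (∫ s in Icc a b, |F (u + s, ω) - F (s, ω)|) ∂P := fun u =>
    integral_prod_symm _ <| Integrable.of_bound (hmeas u).aestronglyMeasurable (2 * C)
      (ae_of_all _ fun p => hbound u p.1 p.2)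
  simp_rw [hfubini]
  have hsection : ∀ ω, LocallyIntegrable fun s => F (s, ω) := fun ω =>
    (memLp_top_of_bound (hF.comp measurable_prodMk_right).aestronglyMeasurable C
      (ae_of_all _ fun s => (Real.norm_eq_abs _).trans_le (hC _))).locallyIntegrable le_top
  have hdom := tendsto_integral_filter_of_dominated_convergence
    (fun _ => 2 * C * volume.real (Icc a b))
    (Eventually.of_forall fun u => ((hmeas u).comp measurable_swap).stronglyMeasurable
      |>.integral_prod_right' |>.aestronglyMeasurable)
    (Eventually.of_forall fun u => ae_of_all _ fun ω =>
      norm_setIntegral_le_of_norm_le_const measure_Icc_lt_top fun s _ => hbound u s ω)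
    (integrable_const (μ := P) _)
    (ae_of_all _ fun ω => by
      simpa [Real.norm_eq_abs] using (hsection ω).tendsto_setIntegral_norm_add_sub a b)
  simpa using hdom

theorem tendsto_setIntegral_integral_dist_add {M : Type*} [PseudoMetricSpace M] [CompactSpace M]
    [MeasurableSpace M] [OpensMeasurableSpace M] {X : ℝ → Ω → M}
    (hX : Measurable fun p : ℝ × Ω => X p.1 p.2) (a b : ℝ) :
    Tendsto (fun u => ∫ s in Icc a b, ∫ ω, dist (X (u + s) ω) (X s ω) ∂P) (𝓝 0) (𝓝 0) := by
  set ν := (volume.restrict (Icc a b)).prod P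
  have hshift : ∀ u : ℝ, Measurable fun p : ℝ × Ω => X (u + p.1) p.2 := fun u =>
    hX.comp ((measurable_const.add measurable_fst).prodMk measurable_snd)
  have hdiam : ∀ x y : M, dist x y ≤ Metric.diam (univ : Set M) := fun x y =>
    Metric.dist_le_diam_of_mem isCompact_univ.isBounded (mem_univ x) (mem_univ y)
  have hbounded : ∀ {f : ℝ × Ω → ℝ}, Measurable f → ∀ {C : ℝ}, (∀ p, |f p| ≤ C) →
      Integrable f ν :=
    fun hf C hC => Integrable.of_bound hf.aestronglyMeasurable C
      (ae_of_all _ fun p => (Real.norm_eq_abs _).trans_le (hC p))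
  have hfubini : ∀ u, ∫ s in Icc a b, ∫ ω, dist (X (u + s) ω) (X s ω) ∂P
      = ∫ p, dist (X (u + p.1) p.2) (X p.1 p.2) ∂ν := fun u =>
    (integral_prod _ (hbounded ((hshift u).dist hX) fun p =>
      (abs_of_nonneg dist_nonneg).trans_le (hdiam _ _))).symm
  simp_rw [hfubini]
  rw [Metric.tendsto_nhds]
  intro ε hε
  obtain ⟨T, hT⟩ := exists_finset_dist_le_add_sum_abs_dist_sub M
    (div_pos hε (by positivity : (0 : ℝ) < 2 * (ν.real univ + 1)))
  set δ := ε / (2 * (ν.real univ + 1))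
  have hterm : ∀ c : M, Measurable fun p : ℝ × Ω => dist (X p.1 p.2) c := fun c =>
    hX.dist measurable_const
  have hsum : Tendsto
      (fun u => ∑ c ∈ T, ∫ p, |dist (X (u + p.1) p.2) c - dist (X p.1 p.2) c| ∂ν) (𝓝 0) (𝓝 0) := by
    simpa using tendsto_finsetSum T fun c _ => tendsto_integral_prod_abs_add_sub P (hterm c)
      (fun p => (abs_of_nonneg dist_nonneg).trans_le (hdiam _ c)) a b
  filter_upwards [hsum.eventually_lt_const (half_pos hε)] with u hu
  have hint : ∀ c ∈ T, Integrable
      (fun p : ℝ × Ω => |dist (X (u + p.1) p.2) c - dist (X p.1 p.2) c|) ν := fun c _ =>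
    hbounded (((hshift u).dist measurable_const).sub (hterm c)).abs fun p => by
      rw [abs_abs]
      exact (abs_dist_sub_le _ _ c).trans (hdiam _ _)
  have hle : ∫ p, dist (X (u + p.1) p.2) (X p.1 p.2) ∂ν ≤
      δ * ν.real univ + ∑ c ∈ T, ∫ p, |dist (X (u + p.1) p.2) c - dist (X p.1 p.2) c| ∂ν := by
    rw [← integral_finsetSum T hint, mul_comm, ← smul_eq_mul, ← integral_const,
      ← integral_add (integrable_const δ) (integrable_finsetSum T hint)]
    exact integral_mono (hbounded ((hshift u).dist hX) fun p =>
        (abs_of_nonneg dist_nonneg).trans_le (hdiam _ _))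
      ((integrable_const δ).add (integrable_finsetSum T hint)) fun p => hT _ _
  have hδ : δ * ν.real univ < ε / 2 := by
    rw [div_mul_eq_mul_div, div_lt_div_iff₀ (by positivity) two_pos]
    nlinarith [measureReal_nonneg (μ := ν) (s := univ)]
  rw [Real.dist_eq, sub_zero, abs_of_nonneg (integral_nonneg fun p => dist_nonneg)]
  linarith
end

theorem tendsto_measure_lt_dist_of_tendsto_integral {ι α : Type*} {l : Filter ι}
    [PseudoMetricSpace α] [MeasurableSpace α] [OpensMeasurableSpace α] {ν : ι → Measure α}
    {a : α} (hint : ∀ i, Integrable (dist a) (ν i))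
    (hmean : Tendsto (fun i => ∫ x, dist a x ∂ν i) l (𝓝 0)) {ε : ℝ} (hε : 0 < ε) :
    Tendsto (fun i => ν i {x | ε < dist a x}) l (𝓝 0) := by
  have hmarkov : ∀ i,
      ν i {x | ε < dist a x} ≤ ENNReal.ofReal (∫ x, dist a x ∂ν i) / ENNReal.ofReal ε :=
    fun i => calc
      ν i {x | ε < dist a x} ≤ ν i {x | ENNReal.ofReal ε ≤ ENNReal.ofReal (dist a x)} :=
        measure_mono fun x hx => ENNReal.ofReal_le_ofReal (le_of_lt hx)
      _ ≤ (∫⁻ x, ENNReal.ofReal (dist a x) ∂ν i) / ENNReal.ofReal ε :=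
        meas_ge_le_lintegral_div (hint i).aemeasurable.ennreal_ofReal
          (ENNReal.ofReal_pos.2 hε).ne' ENNReal.ofReal_ne_top
      _ = _ := by
        rw [ofReal_integral_eq_lintegral_ofReal (hint i) (ae_of_all _ fun _ => dist_nonneg)]
  have hlim :
      Tendsto (fun i => ENNReal.ofReal (∫ x, dist a x ∂ν i) / ENNReal.ofReal ε) l (𝓝 0) := by
    simpa using ENNReal.Tendsto.div_const (ENNReal.tendsto_ofReal hmean)
      (Or.inr (ENNReal.ofReal_pos.2 hε).ne')
  exact tendsto_of_tendsto_of_tendsto_of_le_of_le tendsto_const_nhds hlim (fun _ => zero_le)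
    hmarkov

theorem integral_dist_increment_eq_of_stationary {Ω G : Type*} [MeasurableSpace Ω]
    [Group G] [PseudoMetricSpace G] [MeasurableSpace G] [OpensMeasurableSpace G]
    [MeasurableMul₂ G] [MeasurableInv G]
    (hinvL : ∀ g x y : G, dist (g * x) (g * y) = dist x y) (P : Measure Ω) {X : ℝ → Ω → G}
    (hX : ∀ t, Measurable (X t))
    (hstat : ∀ t₁ t₂ : ℝ, 0 ≤ t₁ → t₁ < t₂ →
      P.map (fun ω => (X t₁ ω)⁻¹ * X t₂ ω) = P.map (fun ω => (X 0 ω)⁻¹ * X (t₂ - t₁) ω))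
    {s t : ℝ} (hs : 0 ≤ s) (ht : 0 < t) :
    ∫ ω, dist (X (t + s) ω) (X s ω) ∂P = ∫ g, dist 1 g ∂P.map fun ω => (X 0 ω)⁻¹ * X t ω := by
  have hdist : ∀ ω, dist (X (t + s) ω) (X s ω) = dist 1 ((X s ω)⁻¹ * X (t + s) ω) :=
    fun ω => by rw [dist_comm, ← hinvL (X s ω)⁻¹, inv_mul_cancel]
  simp_rw [hdist]
  have hincr : Measurable fun ω => (X s ω)⁻¹ * X (t + s) ω := (hX s).inv.mul (hX (t + s))
  rw [← integral_map (f := dist 1) hincr.aemeasurable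
      (continuous_const.dist continuous_id).aestronglyMeasurable,
    hstat s (t + s) hs (by linarith), add_sub_cancel_right]

theorem increments_tendsto_dirac_general
    {Ω G : Type*} [MeasurableSpace Ω]
    [Group G] [MetricSpace G] [IsTopologicalGroup G] [CompactSpace G]
    [MeasurableSpace G] [BorelSpace G]
    -- the metric is translation-invariant:
    (hinvL : ∀ g x y : G, dist (g * x) (g * y) = dist x y)
    (P : Measure Ω) [IsProbabilityMeasure P]
    (X : ℝ → Ω → G)
    -- joint measurability of `(t, ω) ↦ X_t(ω)`:
    (hjm : Measurable fun p : ℝ × Ω => X p.1 p.2)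
    -- stationary increments:
    (hstat : ∀ t₁ t₂ : ℝ, 0 ≤ t₁ → t₁ < t₂ →
      P.map (fun ω => (X t₁ ω)⁻¹ * X t₂ ω) = P.map (fun ω => (X 0 ω)⁻¹ * X (t₂ - t₁) ω))
    (μ : ℝ → Measure G)
    (hμ : ∀ t : ℝ, 0 ≤ t → μ t = P.map fun ω => (X 0 ω)⁻¹ * X t ω) :
    ∀ ε : ℝ, 0 < ε →
      Tendsto (fun t => μ t {g : G | ε < dist (1 : G) g})
        (nhdsWithin 0 (Set.Ioi 0)) (nhds 0) := by
  intro ε hε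
  have hX : ∀ t, Measurable (X t) := fun t => hjm.comp measurable_prodMk_left
  have hmean_eq : ∀ t, 0 < t → ∫ s in Icc 0 1, ∫ ω, dist (X (t + s) ω) (X s ω) ∂P =
      ∫ g, dist 1 g ∂P.map fun ω => (X 0 ω)⁻¹ * X t ω := fun t ht => by
    rw [setIntegral_congr_fun measurableSet_Icc fun s hs =>
      integral_dist_increment_eq_of_stationary hinvL P hX hstat hs.1 ht]
    simp
  have hmean :
      Tendsto (fun t => ∫ g, dist 1 g ∂P.map fun ω => (X 0 ω)⁻¹ * X t ω) (𝓝[>] 0) (𝓝 0) :=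
    ((tendsto_setIntegral_integral_dist_add P hjm 0 1).mono_left nhdsWithin_le_nhds).congr'
      (eventually_nhdsWithin_of_forall hmean_eq)
  refine (tendsto_measure_lt_dist_of_tendsto_integral (fun t => ?_) hmean hε).congr'
    (eventually_nhdsWithin_of_forall fun t ht => by dsimp only; rw [hμ t ht.le])
  exact (continuous_const.dist continuous_id).integrable_of_hasCompactSupport
    (HasCompactSupport.of_compactSpace _)

/-- Let `G` be a metrizable compact group, realized as a compact metric group whose
metric `d` is translation-invariant, and let `X` be a jointly measurable `G`-valued
process with stationary and independent increments. Then the distribution `μ_t` of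
`X₀⁻¹ X_t` converges weakly to the Dirac measure at the identity as `t ↓ 0`;
equivalently, for every `ε > 0`, `μ_t {g : d(e_G, g) > ε} → 0` as `t ↓ 0`. -/
theorem increments_tendsto_dirac
    {Ω G : Type*} [MeasurableSpace Ω]
    [Group G] [MetricSpace G] [IsTopologicalGroup G] [CompactSpace G]
    [MeasurableSpace G] [BorelSpace G]
    -- the metric is translation-invariant:
    (hinvL : ∀ g x y : G, dist (g * x) (g * y) = dist x y)
    (hinvR : ∀ g x y : G, dist (x * g) (y * g) = dist x y)
    (P : Measure Ω) [IsProbabilityMeasure P]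
    (X : ℝ → Ω → G)
    -- joint measurability of `(t, ω) ↦ X_t(ω)`:
    (hjm : Measurable fun p : ℝ × Ω => X p.1 p.2)
    -- stationary increments:
    (hstat : ∀ t₁ t₂ : ℝ, 0 ≤ t₁ → t₁ < t₂ →
      P.map (fun ω => (X t₁ ω)⁻¹ * X t₂ ω) = P.map (fun ω => (X 0 ω)⁻¹ * X (t₂ - t₁) ω))
    -- independent increments:
    (hind : ∀ (n : ℕ) (t : Fin (n + 1) → ℝ), 0 ≤ t 0 → StrictMono t →
      iIndepFun (β := fun _ => G)
        (fun i : Fin (n + 1) =>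
          Fin.cases (fun ω => X (t 0) ω)
            (fun j (ω : Ω) => (X (t j.castSucc) ω)⁻¹ * X (t j.succ) ω) i) P)
    (μ : ℝ → Measure G)
    (hμ : ∀ t : ℝ, 0 ≤ t → μ t = P.map fun ω => (X 0 ω)⁻¹ * X t ω) :
    ∀ ε : ℝ, 0 < ε →
      Tendsto (fun t => μ t {g : G | ε < dist (1 : G) g})
        (nhdsWithin 0 (Set.Ioi 0)) (nhds 0) :=
  increments_tendsto_dirac_general hinvL P X hjm hstat μ hμ
end
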